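/- Lemma (summable bound on I_{n,t}): For all integers 0 ≤ t ≤ n and every ζ ∈ ℝ with |ζ| ≤ n, one has |I_{n,t}| ≤ s_t, where s_t := (6|ζ|)^t · (2t+1) · e^{|ζ|} / t!. Moreover, ∑_{t=0}^{∞} s_t < ∞. -/

import Mathlib

open MeasureTheory ProbabilityTheory Filter Real

noncomputable section

/-- `Z_{n,t}(k)`: the inner binomial sum appearing in the expected MGF. -/
def Znt (q n t : ℕ) (γ β ζ Λn : ℝ) (k : ℤ) : ℂ :=
  (2 : ℂ) ^ ((t : ℤ) - (n : ℤ)) *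
    ∑ τ ∈ Finset.range (n - t + 1),
      (Nat.choose (n - t) τ : ℂ) *
        ((Real.exp (ζ / n) * Real.cos β ^ 2 + Real.exp (-ζ / n) * Real.sin β ^ 2 : ℝ) : ℂ) ^ τ *
        ((Real.exp (-ζ / n) * Real.cos β ^ 2 + Real.exp (ζ / n) * Real.sin β ^ 2 : ℝ) : ℂ) ^
          (n - t - τ) *
        Complex.exp (Complex.I * (Λn : ℂ) * (γ : ℂ) *
          (((((2 * τ : ℝ) - ((n : ℝ) - t) + k) ^ q - ((2 * τ : ℝ) - ((n : ℝ) - t) - k) ^ q) /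
              (n : ℝ) ^ (((q : ℝ) - 1) / 2) : ℝ) : ℂ))

/-- `Ẑ_{n,t}(ξ)`: discrete Fourier transform of `k ↦ Z_{n,t}(k)`. -/
def Zhat (q n t : ℕ) (γ β ζ Λn : ℝ) (ξ : ℤ) : ℂ :=
  ∑ k ∈ Finset.Icc (-(t : ℤ)) (t : ℤ),
    Complex.exp (-(2 * (π : ℂ) * Complex.I * (ξ : ℂ) * (k : ℂ)) / (2 * (t : ℂ) + 1)) *
      Znt q n t γ β ζ Λn k

/-- `E_{n,t}`. -/
def Ent (q n t : ℕ) (γ β ζ Λn : ℝ) : ℂ :=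
  (2 * (t : ℂ) + 1)⁻¹ *
    ∑ ξ ∈ Finset.Icc (-(t : ℤ)) (t : ℤ),
      ((Real.sin (2 * π * ξ / (2 * t + 1)) : ℝ) : ℂ) ^ t * Zhat q n t γ β ζ Λn ξ

/-- `I_{n,t}`. -/
def Int' (q n t : ℕ) (γ β ζ Λn : ℝ) : ℂ :=
  (Nat.choose n t : ℂ) *
    ((Real.exp (-(γ ^ 2 * ((n : ℝ) ^ q - ((n : ℝ) - 2 * t) ^ q) / (n : ℝ) ^ (q - 1))) : ℝ) : ℂ) *
    ((Real.sinh (ζ / n) * Real.sin (2 * β) : ℝ) : ℂ) ^ t * Ent q n t γ β ζ Λn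

/-!
Each factor of `I_{n,t}` is bounded separately. The Gaussian factor is at most `1` because
`|n - 2t| ≤ n`. Each `Z_{n,t}(k)` is a binomial sum of unimodular terms whose two weights add up to
`2 cosh (ζ/n)`, so `|Z_{n,t}(k)| ≤ cosh (ζ/n) ^ (n - t) ≤ e^{|ζ|}`; the sums over `k` and `ξ` each
cost a factor `2t + 1`, one of which the normalisation `(2t+1)⁻¹` cancels. Finally
`|sinh x| ≤ 2|x|` for `|x| ≤ 1` and `binom(n,t) ≤ n^t / t!` give
`binom(n,t) |sinh (ζ/n)|^t ≤ (2|ζ|)^t / t!`. Summability of `s_t` follows by comparison with the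
exponential series, since `2t + 1 ≤ 2 ^ (t+1)`.
-/

open Finset Nat

lemma natCast_mul_div_le (n : ℕ) {x : ℝ} (hx : 0 ≤ x) : n * (x / n) ≤ x := by
  rcases n.eq_zero_or_pos with rfl | hn
  · simpa using hx
  · rw [mul_div_cancel₀ _ (by positivity)]

lemma Real.abs_sinh_le_two_mul_abs {x : ℝ} (hx : |x| ≤ 1) : |sinh x| ≤ 2 * |x| := by
  have h₁ := abs_exp_sub_one_le hx
  have h₂ := abs_exp_sub_one_le (x := -x) (by rwa [abs_neg])
  rw [abs_neg] at h₂
  calc |sinh x| = |(exp x - 1) - (exp (-x) - 1)| / 2 := by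
        rw [sinh_eq, abs_div, abs_two]; ring_nf
    _ ≤ (2 * |x| + 2 * |x|) / 2 := by gcongr; exact (abs_sub _ _).trans (add_le_add h₁ h₂)
    _ = 2 * |x| := by ring

lemma Real.cosh_le_exp_abs (x : ℝ) : cosh x ≤ exp |x| := by
  rw [← cosh_abs, cosh_eq]
  linarith [exp_le_exp.2 (neg_le_self (abs_nonneg x))]

lemma Nat.choose_mul_div_pow_le (n t : ℕ) {x : ℝ} (hx : 0 ≤ x) :
    (n.choose t : ℝ) * (x / n) ^ t ≤ x ^ t / t ! := by
  calc (n.choose t : ℝ) * (x / n) ^ t ≤ (n : ℝ) ^ t / t ! * (x / n) ^ t := by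
        gcongr; exact choose_le_pow_div t n
    _ = (n * (x / n)) ^ t / t ! := by ring
    _ ≤ x ^ t / t ! := by gcongr; exact natCast_mul_div_le n hx

lemma sub_two_mul_pow_le_pow {n t : ℕ} (ht : t ≤ n) (q : ℕ) :
    ((n : ℝ) - 2 * t) ^ q ≤ (n : ℝ) ^ q := by
  have ht' : (t : ℝ) ≤ n := by exact_mod_cast ht
  have habs : |(n : ℝ) - 2 * t| ≤ n := abs_le.2 ⟨by linarith, by linarith [t.cast_nonneg (α := ℝ)]⟩
  calc ((n : ℝ) - 2 * t) ^ q ≤ |(n : ℝ) - 2 * t| ^ q := (le_abs_self _).trans (abs_pow _ _).le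
    _ ≤ (n : ℝ) ^ q := pow_le_pow_left₀ (abs_nonneg _) habs q

lemma norm_sum_choose_mul_pow_mul_le (a b : ℂ) {u : ℕ → ℂ} (hu : ∀ τ, ‖u τ‖ ≤ 1) (m : ℕ) :
    ‖∑ τ ∈ range (m + 1), (m.choose τ : ℂ) * a ^ τ * b ^ (m - τ) * u τ‖ ≤ (‖a‖ + ‖b‖) ^ m := by
  rw [add_pow]
  refine norm_sum_le_of_le _ fun τ _ => ?_
  rw [norm_mul, norm_mul, norm_mul, norm_pow, norm_pow, Complex.norm_natCast]
  calc (m.choose τ : ℝ) * ‖a‖ ^ τ * ‖b‖ ^ (m - τ) * ‖u τ‖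
      ≤ (m.choose τ : ℝ) * ‖a‖ ^ τ * ‖b‖ ^ (m - τ) * 1 := by gcongr; exact hu τ
    _ = ‖a‖ ^ τ * ‖b‖ ^ (m - τ) * m.choose τ := by ring

lemma norm_sum_Icc_neg_le {E : Type*} [SeminormedAddCommGroup E] (t : ℕ) {f : ℤ → E} {C : ℝ}
    (h : ∀ k ∈ Icc (-(t : ℤ)) t, ‖f k‖ ≤ C) :
    ‖∑ k ∈ Icc (-(t : ℤ)) t, f k‖ ≤ (2 * t + 1) * C := by
  refine (norm_sum_le_of_le _ h).trans_eq ?_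
  rw [sum_const, Int.card_Icc, nsmul_eq_mul, show (t + 1 - -t : ℤ).toNat = 2 * t + 1 by omega]
  push_cast; ring

lemma norm_Znt_le (q n t : ℕ) (γ β ζ Λn : ℝ) (k : ℤ) (ht : t ≤ n) :
    ‖Znt q n t γ β ζ Λn k‖ ≤ exp |ζ| := by
  set A := exp (ζ / n) * cos β ^ 2 + exp (-ζ / n) * sin β ^ 2
  set B := exp (-ζ / n) * cos β ^ 2 + exp (ζ / n) * sin β ^ 2
  have hAB : ‖(A : ℂ)‖ + ‖(B : ℂ)‖ = 2 * cosh (ζ / n) := by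
    rw [Complex.norm_real, Complex.norm_real, Real.norm_of_nonneg (by positivity),
      Real.norm_of_nonneg (by positivity), cosh_eq]
    simp only [A, B, neg_div]
    linear_combination (exp (ζ / n) + exp (-(ζ / n))) * cos_sq_add_sin_sq β
  have hpow2 : ‖(2 : ℂ) ^ ((t : ℤ) - n)‖ * 2 ^ (n - t) = 1 := by
    rw [norm_zpow, Complex.norm_two, ← zpow_natCast, ← zpow_add₀ two_ne_zero, Nat.cast_sub ht]
    simp
  calc ‖Znt q n t γ β ζ Λn k‖ ≤ ‖(2 : ℂ) ^ ((t : ℤ) - n)‖ * (2 * cosh (ζ / n)) ^ (n - t) := by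
        rw [Znt, norm_mul, ← hAB]
        gcongr
        refine norm_sum_choose_mul_pow_mul_le _ _ (fun _ => ?_) _
        simp only [Complex.norm_exp, Complex.mul_re, Complex.mul_im, Complex.I_re, Complex.I_im,
          Complex.ofReal_re, Complex.ofReal_im]
        simp
    _ = cosh (ζ / n) ^ (n - t) := by rw [mul_pow, ← mul_assoc, hpow2, one_mul]
    _ ≤ exp |ζ / n| ^ n :=
        (pow_le_pow_left₀ (cosh_pos _).le (cosh_le_exp_abs _) _).trans
          (pow_le_pow_right₀ (one_le_exp (abs_nonneg _)) (n.sub_le t))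
    _ ≤ exp |ζ| := by
        rw [← exp_nat_mul, abs_div, Nat.abs_cast]
        exact exp_le_exp.2 (natCast_mul_div_le n (abs_nonneg ζ))

lemma norm_Zhat_le (q n t : ℕ) (γ β ζ Λn : ℝ) (ξ : ℤ) (ht : t ≤ n) :
    ‖Zhat q n t γ β ζ Λn ξ‖ ≤ (2 * t + 1) * exp |ζ| := by
  refine norm_sum_Icc_neg_le t fun k _ => ?_
  have hphase : -(2 * (π : ℂ) * Complex.I * ξ * k) / (2 * t + 1)
      = ((-(2 * π * ξ * k) / (2 * t + 1) : ℝ) : ℂ) * Complex.I := by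
    push_cast; ring
  rw [norm_mul, hphase, Complex.norm_exp_ofReal_mul_I, one_mul]
  exact norm_Znt_le q n t γ β ζ Λn k ht

lemma norm_Ent_le (q n t : ℕ) (γ β ζ Λn : ℝ) (ht : t ≤ n) :
    ‖Ent q n t γ β ζ Λn‖ ≤ (2 * t + 1) * exp |ζ| := by
  have hsum := norm_sum_Icc_neg_le t (f := fun ξ : ℤ =>
      ((sin (2 * π * ξ / (2 * t + 1)) : ℝ) : ℂ) ^ t * Zhat q n t γ β ζ Λn ξ)
    (C := (2 * t + 1) * exp |ζ|) fun ξ _ => by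
      rw [norm_mul, norm_pow, Complex.norm_real, Real.norm_eq_abs]
      exact mul_le_of_le_one_left (norm_nonneg _)
        (pow_le_one₀ (abs_nonneg _) (abs_sin_le_one _)) |>.trans (norm_Zhat_le q n t γ β ζ Λn ξ ht)
  have hnorm : ‖(2 * (t : ℂ) + 1)⁻¹‖ = (2 * t + 1 : ℝ)⁻¹ := by
    rw [norm_inv, show (2 * (t : ℂ) + 1) = ((2 * t + 1 : ℝ) : ℂ) by push_cast; ring,
      Complex.norm_real, Real.norm_of_nonneg (by positivity)]
  rw [Ent, norm_mul, hnorm]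
  calc (2 * t + 1 : ℝ)⁻¹ * ‖_‖ ≤ (2 * t + 1 : ℝ)⁻¹ * ((2 * t + 1) * ((2 * t + 1) * exp |ζ|)) := by
        gcongr
    _ = (2 * t + 1) * exp |ζ| := by field_simp

lemma gaussian_factor_le_one (q n t : ℕ) (γ : ℝ) (ht : t ≤ n) :
    exp (-(γ ^ 2 * ((n : ℝ) ^ q - ((n : ℝ) - 2 * t) ^ q) / (n : ℝ) ^ (q - 1))) ≤ 1 := by
  rw [exp_le_one_iff, neg_nonpos]
  have := sub_two_mul_pow_le_pow ht q
  exact div_nonneg (mul_nonneg (sq_nonneg γ) (by linarith)) (by positivity)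

lemma abs_sinh_div_mul_sin_le {ζ : ℝ} {n : ℕ} (hζ : |ζ| ≤ n) (β : ℝ) :
    |sinh (ζ / n) * sin (2 * β)| ≤ 2 * |ζ| / n := by
  have habs : |ζ / n| = |ζ| / n := by rw [abs_div, Nat.abs_cast]
  calc |sinh (ζ / n) * sin (2 * β)| ≤ |sinh (ζ / n)| * 1 := by
        rw [abs_mul]; gcongr; exact abs_sin_le_one _
    _ ≤ 2 * |ζ| / n := by
        rw [mul_one, mul_div_assoc, ← habs]
        exact abs_sinh_le_two_mul_abs (habs ▸ div_le_one_of_le₀ hζ n.cast_nonneg)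

lemma norm_Int'_le (q n t : ℕ) (γ β ζ Λn : ℝ) (ht : t ≤ n) (hζ : |ζ| ≤ n) :
    ‖Int' q n t γ β ζ Λn‖ ≤ (2 * |ζ|) ^ t * (2 * t + 1) * exp |ζ| / t ! := by
  rw [Int', norm_mul, norm_mul, norm_mul, Complex.norm_natCast, Complex.norm_real,
    Real.norm_of_nonneg (exp_pos _).le, norm_pow, Complex.norm_real, Real.norm_eq_abs]
  calc _ ≤ (n.choose t : ℝ) * 1 * (2 * |ζ| / n) ^ t * ((2 * t + 1) * exp |ζ|) := by
        gcongr
        · exact gaussian_factor_le_one q n t γ ht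
        · exact abs_sinh_div_mul_sin_le hζ β
        · exact norm_Ent_le q n t γ β ζ Λn ht
    _ ≤ (2 * |ζ|) ^ t / t ! * ((2 * t + 1) * exp |ζ|) := by
        rw [mul_one]; gcongr; exact choose_mul_div_pow_le n t (by positivity)
    _ = (2 * |ζ|) ^ t * (2 * t + 1) * exp |ζ| / t ! := by ring

lemma summable_pow_mul_two_mul_add_one_div_factorial {x : ℝ} (hx : 0 ≤ x) :
    Summable fun t : ℕ => x ^ t * (2 * t + 1) / t ! := by
  refine .of_nonneg_of_le (fun t => by positivity) (fun t => ?_)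
    ((summable_pow_div_factorial (2 * x)).mul_left 2)
  have h : (2 * t + 1 : ℝ) ≤ 2 * 2 ^ t := by
    have : t + 1 ≤ 2 ^ t := Nat.lt_two_pow_self
    exact_mod_cast (by omega : 2 * t + 1 ≤ 2 * 2 ^ t)
  calc x ^ t * (2 * t + 1) / t ! ≤ x ^ t * (2 * 2 ^ t) / t ! := by gcongr
    _ = 2 * ((2 * x) ^ t / t !) := by ring

theorem Int_summable_bound_general
    (q : ℕ) (γ β ζ : ℝ) :
    (∀ (Λn : ℝ), 0 ≤ Λn → ∀ n t : ℕ, t ≤ n → |ζ| ≤ n →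
        ‖Int' q n t γ β ζ Λn‖ ≤
          (6 * |ζ|) ^ t * (2 * t + 1) * Real.exp |ζ| / t.factorial) ∧
      Summable (fun t : ℕ => (6 * |ζ|) ^ t * (2 * t + 1) * Real.exp |ζ| / t.factorial) := by
  refine ⟨fun Λn _ n t ht hζ => (norm_Int'_le q n t γ β ζ Λn ht hζ).trans ?_, ?_⟩
  · gcongr; linarith [abs_nonneg ζ]
  · have hs := summable_pow_mul_two_mul_add_one_div_factorial (x := 6 * |ζ|) (by positivity)
    exact (hs.mul_right (exp |ζ|)).congr fun t => by ring

/-- **Lemma (summable bound on `I_{n,t}`)**: for `0 ≤ t ≤ n` and `|ζ| ≤ n`,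
`|I_{n,t}| ≤ s_t := (6|ζ|)^t (2t+1) e^{|ζ|} / t!`, and `∑_t s_t < ∞`. -/
theorem Int_summable_bound
    (q : ℕ) (hq : 2 ≤ q) (γ β ζ : ℝ) :
    (∀ (Λn : ℝ), 0 ≤ Λn → ∀ n t : ℕ, t ≤ n → |ζ| ≤ n →
        ‖Int' q n t γ β ζ Λn‖ ≤
          (6 * |ζ|) ^ t * (2 * t + 1) * Real.exp |ζ| / t.factorial) ∧
      Summable (fun t : ℕ => (6 * |ζ|) ^ t * (2 * t + 1) * Real.exp |ζ| / t.factorial) :=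
  Int_summable_bound_general q γ β ζ
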